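/- arXiv:2004.02694 — 3 statements merged into one kernel-verified Lean document; each statement's English description precedes it below -/
import Mathlib

section
/- Let G be a finite group and H a subgroup of G with λ_G(H) ≠ 0. Then H belongs to MaxInt(G), i.e. H is either equal to G or is an intersection of maximal subgroups of G. -/
open Classical in
/-- The Möbius function of a finite partial order with a top element:
`mob ⊤ = 1` and `mob x = -∑_{x < y ≤ ⊤} mob y` for `x ≠ ⊤`. -/
noncomputable def mob {α : Type*} [PartialOrder α] [OrderTop α] [Finite α] (x : α) : ℤ :=
  if x = ⊤ then 1
  else - ∑ y ∈ (Set.toFinite {y : α | x < y}).toFinset.attach, mob y.1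
termination_by (Set.toFinite {y : α | x < y}).toFinset.card
decreasing_by
  have hy : x < y.1 := by
    have h2 := y.2
    rwa [Set.Finite.mem_toFinset] at h2
  refine Finset.card_lt_card ?_
  rw [Finset.ssubset_iff_of_subset]
  · exact ⟨y.1, by rwa [Set.Finite.mem_toFinset], by simp [Set.Finite.mem_toFinset]⟩
  · intro z hz
    rw [Set.Finite.mem_toFinset] at hz ⊢
    exact hy.trans hz

section C

variable (G : Type*) [Group G]

instance subgroupFinite [Finite G] : Finite (Subgroup G) :=
  Finite.of_injective (fun H => (H : Set G)) SetLike.coe_injective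

/-- Type synonym for `Subgroup G`, endowed with the preorder `H ≼ K` iff
`H ≤ gKg⁻¹` for some `g : G`. -/
def CSub := Subgroup G

variable {G}

/-- Conversion from `Subgroup G` to the type synonym `CSub G`. -/
def CSub.mk (H : Subgroup G) : CSub G := H

/-- Conversion from the type synonym `CSub G` to `Subgroup G`. -/
def CSub.toSubgroup (H : CSub G) : Subgroup G := H

variable (G)

instance : Preorder (CSub G) where
  le H K := ∃ g : G, H.toSubgroup ≤ K.toSubgroup.map (MulAut.conj g).toMonoidHom
  le_refl H := ⟨1, by
    simp only [map_one]
    rw [show MulEquiv.toMonoidHom (1 : MulAut G) = MonoidHom.id G from rfl, Subgroup.map_id]⟩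
  le_trans H K L := by
    rintro ⟨g, hg⟩ ⟨h, hh⟩
    refine ⟨g * h, hg.trans ?_⟩
    have hm := Subgroup.map_mono (f := (MulAut.conj g).toMonoidHom) hh
    rw [Subgroup.map_map] at hm
    refine hm.trans (le_of_eq ?_)
    congr 1
    ext x
    simp [mul_assoc]

instance [Finite G] : Finite (CSub G) := subgroupFinite G

/-- The poset of conjugacy classes of subgroups of `G`: for a finite group this is
the quotient of subgroups by conjugacy, with `[H] ≤ [K]` iff `H ≤ gKg⁻¹` for some `g ∈ G`. -/
abbrev ConjClassSub := Antisymmetrization (CSub G) (· ≤ ·)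

/-- The conjugacy class of a subgroup, as an element of `ConjClassSub G`. -/
def conjClassOf (H : Subgroup G) : ConjClassSub G :=
  toAntisymmetrization (α := CSub G) (· ≤ ·) (CSub.mk H)

instance : OrderTop (ConjClassSub G) where
  top := conjClassOf G ⊤
  le_top c := by
    induction c using Quotient.ind with
    | _ H =>
      show toAntisymmetrization (α := CSub G) (· ≤ ·) H ≤
        toAntisymmetrization (α := CSub G) (· ≤ ·) (CSub.mk ⊤)
      rw [toAntisymmetrization_le_toAntisymmetrization_iff]
      refine ⟨1, ?_⟩
      show H.toSubgroup ≤ Subgroup.map (MulAut.conj (1:G)).toMonoidHom (⊤ : Subgroup G)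
      rw [Subgroup.map_top_of_surjective _ (MulAut.conj (1:G)).surjective]
      exact le_top

instance [Finite G] : Finite (ConjClassSub G) := Quotient.finite _

variable {G}

/-- The Möbius function `μ_G` on the subgroup lattice of the finite group `G`. -/
noncomputable def muSub [Finite G] (H : Subgroup G) : ℤ := mob H

/-- The Möbius function `λ_G` on the poset of conjugacy classes of subgroups of the
finite group `G`, evaluated at the class of `H`. -/
noncomputable def lamSub [Finite G] (H : Subgroup G) : ℤ :=
  mob (conjClassOf G H)

/-- `G` satisfies the (μ,λ)-property if `μ_G(H) = [N_{G'}(H) : G' ∩ H] · λ_G(H)`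
for every subgroup `H ≤ G`, where `G' = [G,G]` and `N_{G'}(H) = N_G(H) ∩ G'`. -/
def MuLambdaProperty (G : Type*) [Group G] [Finite G] : Prop :=
  ∀ H : Subgroup G,
    muSub H =
      ((commutator G ⊓ H).relIndex (Subgroup.normalizer (H : Set G) ⊓ commutator G) : ℤ) * lamSub H

/-- `MaxInt G` consists of `G` itself (the subgroup `⊤`) together with all
intersections of nonempty families of maximal subgroups of `G`. -/
def MaxInt (G : Type*) [Group G] : Set (Subgroup G) :=
  {H | H = ⊤ ∨ ∃ S : Set (Subgroup G), S.Nonempty ∧ (∀ M ∈ S, IsCoatom M) ∧ H = sInf S}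

end C

instance {n R : Type*} [DecidableEq n] [Fintype n] [CommRing R] [Finite R] :
    Finite (Matrix.SpecialLinearGroup n R) :=
  Finite.of_injective (fun A => (A : Matrix n n R)) Subtype.coe_injective

open scoped MatrixGroups


/-!
Let `J(H)` (`Subgroup.coatomClosure H`) be the intersection of the maximal subgroups
containing `H`. The map `H ↦ J(H)` is extensive, monotone and commutes with conjugation, so it
induces an extensive monotone map on the poset of conjugacy classes, under which only `[G]` goes to `[G]`. By Crapo's closure lemma
the Möbius function vanishes at every class moved by this map. Hence `λ_G(H) ≠ 0` forces
`[J(H)] = [H]`, and since `H ≤ J(H)` are finite of the same order, `J(H) = H`.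
-/

section Mob

variable {α : Type*} [PartialOrder α] [OrderTop α] [Finite α]

lemma mob_of_ne_top {x : α} (hx : x ≠ ⊤) :
    mob x = -∑ y ∈ (Set.toFinite {y : α | x < y}).toFinset, mob y := by
  rw [mob, if_neg hx, Finset.sum_attach]

lemma sum_mob_le_eq_zero {x : α} (hx : x ≠ ⊤) :
    ∑ y ∈ (Set.toFinite {y : α | x ≤ y}).toFinset, mob y = 0 := by
  classical
  have hIci : (Set.toFinite {y : α | x ≤ y}).toFinset =
      insert x (Set.toFinite {y : α | x < y}).toFinset := by
    ext y
    simp [le_iff_eq_or_lt, eq_comm]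
  rw [hIci, Finset.sum_insert (by simp), mob_of_ne_top hx, neg_add_cancel]

/-- Crapo's closure lemma. -/
theorem mob_eq_zero_of_lt_closure (c : α →o α) (le_c : ∀ x, x ≤ c x)
    (hc_top : ∀ x, c x = ⊤ → x = ⊤) {x : α} (hx : x < c x) : mob x = 0 := by
  induction x using WellFoundedGT.induction with
  | _ x ih =>
  have hcx : c x ≠ ⊤ := fun h => hx.ne' (h.trans (hc_top x h).symm)
  rw [mob_of_ne_top (hx.trans_le le_top).ne, neg_eq_zero, ← sum_mob_le_eq_zero hcx]
  refine (Finset.sum_subset (fun y hy => ?_) fun y hy hy' => ?_).symm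
  · simp only [Set.Finite.mem_toFinset] at hy ⊢
    exact hx.trans_le hy
  · simp only [Set.Finite.mem_toFinset] at hy hy'
    -- a closed `y > x` would lie above `c x`
    refine ih y hy ((le_c y).lt_of_ne fun hy_closed => hy' ?_)
    exact hy_closed ▸ c.mono hy.le

end Mob

namespace Subgroup

variable {G : Type*} [Group G]

def coatomClosure (H : Subgroup G) : Subgroup G := sInf {M | IsCoatom M ∧ H ≤ M}

lemma le_coatomClosure (H : Subgroup G) : H ≤ coatomClosure H := le_sInf fun _ hM => hM.2

lemma coatomClosure_mono {H K : Subgroup G} (h : H ≤ K) : coatomClosure H ≤ coatomClosure K :=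
  sInf_le_sInf fun _ hM => ⟨hM.1, h.trans hM.2⟩

lemma coatomClosure_map_equiv (e : G ≃* G) (H : Subgroup G) :
    coatomClosure (H.map e.toMonoidHom) = (coatomClosure H).map e.toMonoidHom := by
  let φ := MulEquiv.mapSubgroup e
  have hcoatoms : φ '' {M | IsCoatom M ∧ H ≤ M} = {M | IsCoatom M ∧ φ H ≤ M} := by
    ext M
    simp [φ.image_eq_preimage_symm, φ.symm.isCoatom_iff, φ.le_symm_apply]
  exact (hcoatoms ▸ sInf_image).trans (φ.map_sInf _).symm

lemma coatomClosure_eq_top_iff [IsCoatomic (Subgroup G)] {H : Subgroup G} :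
    coatomClosure H = ⊤ ↔ H = ⊤ := by
  refine ⟨fun h => ?_, by rintro rfl; exact top_le_iff.mp (le_coatomClosure ⊤)⟩
  by_contra hH
  obtain ⟨M, hM, hHM⟩ := (eq_top_or_exists_le_coatom H).resolve_left hH
  exact hM.1 (top_le_iff.mp (h ▸ sInf_le ⟨hM, hHM⟩))

lemma mem_maxInt_of_coatomClosure_eq [IsCoatomic (Subgroup G)] {H : Subgroup G}
    (h : coatomClosure H = H) : H ∈ MaxInt G := by
  refine (eq_or_ne H ⊤).imp id fun hH => ?_
  obtain ⟨M, hM, hHM⟩ := (eq_top_or_exists_le_coatom H).resolve_left hH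
  exact ⟨{M | IsCoatom M ∧ H ≤ M}, ⟨M, hM, hHM⟩, fun _ hM => hM.1, h.symm⟩

end Subgroup

namespace CSub

variable {G : Type*} [Group G]

lemma mk_le_mk_of_le {H K : Subgroup G} (h : H ≤ K) : CSub.mk H ≤ CSub.mk K := by
  refine ⟨1, ?_⟩
  rw [map_one, show MulEquiv.toMonoidHom (1 : MulAut G) = MonoidHom.id G from rfl,
    Subgroup.map_id]
  exact h

lemma card_le_of_le [Finite G] {H K : CSub G} (h : H ≤ K) :
    Nat.card H.toSubgroup ≤ Nat.card K.toSubgroup := by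
  obtain ⟨g, hg⟩ := h
  exact (Subgroup.card_le_of_le hg).trans_eq
    (Subgroup.card_map_of_injective (MulAut.conj g).injective)

lemma eq_of_le_of_mk_le [Finite G] {H K : Subgroup G} (hHK : H ≤ K)
    (hKH : CSub.mk K ≤ CSub.mk H) : H = K :=
  Subgroup.eq_of_le_of_card_ge hHK (card_le_of_le hKH)

def coatomClosure : CSub G →o CSub G where
  toFun H := CSub.mk H.toSubgroup.coatomClosure
  monotone' := by
    rintro H K ⟨g, hg⟩
    exact ⟨g, (Subgroup.coatomClosure_mono hg).trans_eq (Subgroup.coatomClosure_map_equiv _ _)⟩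

end CSub

namespace ConjClassSub

variable {G : Type*} [Group G]

variable (G) in
def coatomClosure : ConjClassSub G →o ConjClassSub G := CSub.coatomClosure.antisymmetrization

lemma le_coatomClosure (x : ConjClassSub G) : x ≤ coatomClosure G x := by
  induction x using Antisymmetrization.ind with
  | _ H => exact CSub.mk_le_mk_of_le (Subgroup.le_coatomClosure H.toSubgroup)

lemma eq_top_of_coatomClosure_eq_top [Finite G] (x : ConjClassSub G)
    (hx : coatomClosure G x = ⊤) : x = ⊤ := by
  induction x using Antisymmetrization.ind with
  | _ H =>
  have hmax : H.toSubgroup.coatomClosure = ⊤ :=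
    CSub.eq_of_le_of_mk_le le_top
      (toAntisymmetrization_le_toAntisymmetrization_iff.mp hx.ge)
  exact congrArg (conjClassOf G) (Subgroup.coatomClosure_eq_top_iff.mp hmax)

end ConjClassSub

/-- If `λ_G(H) ≠ 0` then `H ∈ MaxInt(G)`. -/
theorem lamSub_ne_zero_mem_maxInt (G : Type*) [Group G] [Finite G] (H : Subgroup G)
    (h : lamSub H ≠ 0) : H ∈ MaxInt G := by
  have hclosed : ConjClassSub.coatomClosure G (conjClassOf G H) = conjClassOf G H := by
    by_contra hne
    exact h (mob_eq_zero_of_lt_closure _ ConjClassSub.le_coatomClosure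
      ConjClassSub.eq_top_of_coatomClosure_eq_top
      ((ConjClassSub.le_coatomClosure _).lt_of_ne' hne))
  exact Subgroup.mem_maxInt_of_coatomClosure_eq
    (CSub.eq_of_le_of_mk_le (Subgroup.le_coatomClosure H)
      (toAntisymmetrization_le_toAntisymmetrization_iff.mp hclosed.le)).symm
end

section
/- Let n ≥ 2 and let G = G_1 × ⋯ × G_n be a direct product of finite groups such that every maximal subgroup M of G splits as a direct product M = M_1 × ⋯ × M_n with M_i ≤ G_i for every i. Then for every subgroup H = H_1 × ⋯ × H_n of G with H_i ≤ G_i for all i, one has λ_G(H) = ∏_{i=1}^n λ_{G_i}(H_i). -/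
open scoped MatrixGroups

/-!
The map `([Hᵢ])ᵢ ↦ [∏ᵢ Hᵢ]` is an order embedding `u` of `∏ᵢ 𝒞(Gᵢ)` into `𝒞(G)` with left adjoint
`l : [S] ↦ ([πᵢ S])ᵢ`, and the hypothesis on maximal subgroups says exactly that `l [S] = ⊤` forces
`S = G` (a proper `S` lies in a maximal subgroup `∏ Mᵢ` with some `Mᵢ` proper). For such a Galois
connection the Möbius function pulls back, `mob (u b) = mob b`: extending `mob` by zero along `u`
satisfies the defining recursion, since `{b | a ≤ u b} = {b | l a ≤ b}`. Finally the Möbius function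
of a product of posets is the product of the Möbius functions.
-/

section Mobius

open Finset
open scoped Classical

variable {α β : Type*} [PartialOrder α] [Fintype α]

theorem sum_filter_le_eq_add_sum_filter_lt {M : Type*} [AddCommMonoid M] (f : α → M) (x : α) :
    ∑ y ∈ {y | x ≤ y}, f y = f x + ∑ y ∈ {y | x < y}, f y := by
  rw [← sum_insert (by simp)]
  congr 1
  ext y
  simp [le_iff_eq_or_lt, eq_comm]

variable [OrderTop α] [PartialOrder β] [OrderTop β] [Fintype β]

theorem sum_mob_filter_le (x : α) :
    ∑ y ∈ {y | x ≤ y}, mob y = if x = ⊤ then 1 else 0 := by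
  by_cases hx : x = ⊤
  · subst hx
    have : ({y | ⊤ ≤ y} : Finset α) = {⊤} := by ext; simp [top_le_iff]
    rw [this, sum_singleton, mob, if_pos rfl, if_pos rfl]
  · have : (Set.toFinite {y | x < y}).toFinset = ({y | x < y} : Finset α) := by ext; simp
    rw [sum_filter_le_eq_add_sum_filter_lt, mob, if_neg hx, if_neg hx, sum_attach, this,
      neg_add_cancel]

theorem eq_mob_of_sum_filter_le {f : α → ℤ}
    (hf : ∀ x, ∑ y ∈ {y | x ≤ y}, f y = if x = ⊤ then 1 else 0) (x : α) : f x = mob x := by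
  induction x using WellFoundedGT.induction with
  | _ x ih =>
    have h := (hf x).trans (sum_mob_filter_le x).symm
    rw [sum_filter_le_eq_add_sum_filter_lt, sum_filter_le_eq_add_sum_filter_lt,
      sum_congr rfl fun y hy => ih y (by simpa using hy)] at h
    exact add_right_cancel h

theorem mob_pi {ι : Type*} [Fintype ι] {P : ι → Type*} [∀ i, PartialOrder (P i)]
    [∀ i, OrderTop (P i)] [∀ i, Fintype (P i)] (x : ∀ i, P i) :
    mob x = ∏ i, mob (x i) := by
  refine (eq_mob_of_sum_filter_le (f := fun x : ∀ i, P i => ∏ i, mob (x i)) (fun x => ?_) x).symm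
  have : ({y | x ≤ y} : Finset (∀ i, P i)) = Fintype.piFinset fun i => {z | x i ≤ z} := by
    ext; simp [Pi.le_def]
  simp [this, ← prod_univ_sum, sum_mob_filter_le, prod_ite_zero, funext_iff]

theorem mob_eq_of_galoisConnection {l : α → β} {u : β → α} (gc : GaloisConnection l u)
    (hu : Function.Injective u) (hl : ∀ a, l a = ⊤ → a = ⊤) (b : β) : mob (u b) = mob b := by
  have hl_top : l ⊤ = ⊤ := hu ((top_unique (gc.le_u_l ⊤)).trans gc.u_top.symm)
  have hf : ∀ a, ∑ a' ∈ {a' | a ≤ a'}, (∑ b, if u b = a' then mob b else 0) =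
      if a = ⊤ then 1 else 0 := by
    intro a
    calc ∑ a' ∈ {a' | a ≤ a'}, (∑ b, if u b = a' then mob b else 0)
        = ∑ b ∈ {b | l a ≤ b}, mob b := by
          rw [sum_comm, sum_filter]
          simp [sum_ite_eq, gc.le_iff_le]
      _ = if a = ⊤ then 1 else 0 := by
          rw [sum_mob_filter_le]
          exact if_congr ⟨hl a, fun h => h ▸ hl_top⟩ rfl rfl
  rw [← eq_mob_of_sum_filter_le hf]
  simp [hu.eq_iff]

end Mobius

section ConjClassSub

variable {G : Type*} [Group G]

theorem conjClassOf_le_conjClassOf {H K : Subgroup G} :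
    conjClassOf G H ≤ conjClassOf G K ↔ ∃ g : G, H ≤ K.map (MulAut.conj g).toMonoidHom :=
  toAntisymmetrization_le_toAntisymmetrization_iff

theorem conjClassOf_out (c : ConjClassSub G) : conjClassOf G (Quotient.out c).toSubgroup = c :=
  Quotient.out_eq c

theorem conjClassOf_eq_top_iff {H : Subgroup G} : conjClassOf G H = ⊤ ↔ H = ⊤ := by
  refine ⟨fun h => ?_, fun h => h ▸ rfl⟩
  obtain ⟨g, hg⟩ := conjClassOf_le_conjClassOf.1 h.ge
  refine Subgroup.map_injective (f := (MulAut.conj g).toMonoidHom) (MulAut.conj g).injective ?_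
  rw [Subgroup.map_top_of_surjective _ (MulAut.conj g).surjective]
  exact top_le_iff.1 hg

end ConjClassSub

section Pi

open Subgroup

variable {ι : Type*} {G : ι → Type*} [∀ i, Group (G i)]

theorem Subgroup.le_pi_univ_iff {S : Subgroup (∀ i, G i)} {B : ∀ i, Subgroup (G i)} :
    S ≤ pi Set.univ B ↔ ∀ i, S.map (Pi.evalMonoidHom G i) ≤ B i := by
  simp [le_pi_iff, map_le_iff_le_comap]

theorem Subgroup.map_evalMonoidHom_pi (B : ∀ i, Subgroup (G i)) (i : ι) :
    (pi Set.univ B).map (Pi.evalMonoidHom G i) = B i := by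
  classical
  refine le_antisymm (le_pi_univ_iff.1 le_rfl i) fun x hx => ⟨Pi.mulSingle i x, ?_, by simp⟩
  simpa using hx

theorem Subgroup.map_conj_pi (g : ∀ i, G i) (B : ∀ i, Subgroup (G i)) :
    (pi Set.univ B).map (MulAut.conj g).toMonoidHom =
      pi Set.univ fun i => (B i).map (MulAut.conj (g i)).toMonoidHom := by
  ext x
  simp only [mem_map_equiv, mem_pi]
  exact Iff.rfl

theorem Subgroup.eq_top_of_map_evalMonoidHom_eq_top [IsCoatomic (Subgroup (∀ i, G i))]
    (hmax : ∀ M : Subgroup (∀ i, G i), IsCoatom M → ∃ M' : ∀ i, Subgroup (G i), M = pi Set.univ M')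
    {S : Subgroup (∀ i, G i)} (hS : ∀ i, S.map (Pi.evalMonoidHom G i) = ⊤) : S = ⊤ := by
  refine (eq_top_or_exists_le_coatom S).resolve_right ?_
  rintro ⟨M, hM, hSM⟩
  obtain ⟨M', rfl⟩ := hmax M hM
  simp only [le_pi_univ_iff, hS, top_le_iff] at hSM
  exact hM.1 (funext hSM ▸ pi_top _)

theorem conjClassOf_le_conjClassOf_pi {S : Subgroup (∀ i, G i)} {B : ∀ i, Subgroup (G i)} :
    conjClassOf _ S ≤ conjClassOf _ (pi Set.univ B) ↔
      ∀ i, conjClassOf _ (S.map (Pi.evalMonoidHom G i)) ≤ conjClassOf _ (B i) := by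
  simp only [conjClassOf_le_conjClassOf, map_conj_pi, le_pi_univ_iff]
  exact (Classical.skolem (p := fun i g => S.map (Pi.evalMonoidHom G i) ≤
    (B i).map (MulAut.conj g).toMonoidHom)).symm

theorem conjClassOf_pi_le_conjClassOf_pi {A B : ∀ i, Subgroup (G i)} :
    conjClassOf _ (pi Set.univ A) ≤ conjClassOf _ (pi Set.univ B) ↔
      ∀ i, conjClassOf _ (A i) ≤ conjClassOf _ (B i) := by
  simp only [conjClassOf_le_conjClassOf_pi, map_evalMonoidHom_pi]

variable (G) in
/-- `([Hᵢ])ᵢ ↦ [∏ᵢ Hᵢ]`, computed on chosen representatives. -/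
noncomputable def conjClassPi : (∀ i, ConjClassSub (G i)) ↪o ConjClassSub (∀ i, G i) :=
  OrderEmbedding.ofMapLEIff
    (fun c => conjClassOf _ (pi Set.univ fun i => (Quotient.out (c i)).toSubgroup)) fun c d => by
      simp only [conjClassOf_pi_le_conjClassOf_pi, conjClassOf_out, Pi.le_def]

theorem conjClassPi_apply (c : ∀ i, ConjClassSub (G i)) :
    conjClassPi G c = conjClassOf _ (pi Set.univ fun i => (Quotient.out (c i)).toSubgroup) :=
  rfl

theorem conjClassPi_conjClassOf (H : ∀ i, Subgroup (G i)) :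
    conjClassPi G (fun i => conjClassOf _ (H i)) = conjClassOf _ (pi Set.univ H) := by
  rw [conjClassPi_apply]
  exact le_antisymm (conjClassOf_pi_le_conjClassOf_pi.2 fun i => (conjClassOf_out _).le)
    (conjClassOf_pi_le_conjClassOf_pi.2 fun i => (conjClassOf_out _).ge)

variable (G) in
/-- `[S] ↦ ([πᵢ S])ᵢ`, computed on a chosen representative. -/
noncomputable def conjClassEval (c : ConjClassSub (∀ i, G i)) (i : ι) : ConjClassSub (G i) :=
  conjClassOf _ ((Quotient.out c).toSubgroup.map (Pi.evalMonoidHom G i))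

theorem gc_conjClassEval_conjClassPi : GaloisConnection (conjClassEval G) (conjClassPi G) := by
  intro c d
  conv_rhs => rw [← conjClassOf_out c]
  rw [conjClassPi_apply, conjClassOf_le_conjClassOf_pi]
  simp only [conjClassOf_out, Pi.le_def, conjClassEval]

theorem eq_top_of_conjClassEval_eq_top [IsCoatomic (Subgroup (∀ i, G i))]
    (hmax : ∀ M : Subgroup (∀ i, G i), IsCoatom M → ∃ M' : ∀ i, Subgroup (G i), M = pi Set.univ M')
    {c : ConjClassSub (∀ i, G i)} (hc : conjClassEval G c = ⊤) : c = ⊤ := by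
  rw [← conjClassOf_out c, conjClassOf_eq_top_iff]
  exact eq_top_of_map_evalMonoidHom_eq_top hmax fun i => conjClassOf_eq_top_iff.1 (congr_fun hc i)

end Pi

theorem lamSub_pi_general (n : ℕ) (G : Fin n → Type*) [∀ i, Group (G i)] [∀ i, Finite (G i)]
    (hmax : ∀ M : Subgroup (∀ i, G i), IsCoatom M →
      ∃ M' : ∀ i, Subgroup (G i), M = Subgroup.pi Set.univ M')
    (H : ∀ i, Subgroup (G i)) :
    lamSub (Subgroup.pi Set.univ H) = ∏ i, lamSub (H i) := by
  have := Fintype.ofFinite (ConjClassSub (∀ i, G i))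
  have := fun i => Fintype.ofFinite (ConjClassSub (G i))
  calc lamSub (Subgroup.pi Set.univ H) = mob (conjClassPi G fun i => conjClassOf _ (H i)) := by
        rw [conjClassPi_conjClassOf]; rfl
    _ = mob fun i => conjClassOf _ (H i) :=
        mob_eq_of_galoisConnection gc_conjClassEval_conjClassPi (conjClassPi G).injective
          (fun _ => eq_top_of_conjClassEval_eq_top hmax) _
    _ = ∏ i, lamSub (H i) := mob_pi _

/-- If every maximal subgroup of `G = ∏ Gᵢ` splits as a direct product, then the Möbius
function `λ` of a product subgroup is the product of the `λ` functions. -/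
theorem lamSub_pi (n : ℕ) (hn : 2 ≤ n) (G : Fin n → Type*) [∀ i, Group (G i)] [∀ i, Finite (G i)]
    (hmax : ∀ M : Subgroup (∀ i, G i), IsCoatom M →
      ∃ M' : ∀ i, Subgroup (G i), M = Subgroup.pi Set.univ M')
    (H : ∀ i, Subgroup (G i)) :
    lamSub (Subgroup.pi Set.univ H) = ∏ i, lamSub (H i) :=
  lamSub_pi_general n G hmax H
end

section
/- Let G_1 and G_2 be finite groups such that no nontrivial quotient of G_1 is isomorphic to a nontrivial quotient of G_2. Then every maximal subgroup M of the direct product G_1 × G_2 splits as a direct product M = M_1 × M_2 with M_1 ≤ G_1 and M_2 ≤ G_2. -/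
open scoped MatrixGroups

/-! A subgroup `M` of `G₁ × G₂` lies in the product of its two projections, so a maximal `M` either
equals that product or projects onto both factors. In the second case Goursat's lemma identifies
`G₁ ⧸ N₁` with `G₂ ⧸ N₂`, where `N₁ = {g | (g, 1) ∈ M}` and `N₂ = {h | (1, h) ∈ M}`; neither is the
whole factor, since together with the surjectivity of the other projection that would force
`M = ⊤`. -/

namespace Subgroup

open Function

variable {G H : Type*} [Group G] [Group H] {I : Subgroup (G × H)}

lemma le_prod_map_fst_map_snd (I : Subgroup (G × H)) :
    I ≤ (I.map (MonoidHom.fst G H)).prod (I.map (MonoidHom.snd G H)) :=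
  le_prod_iff.2 ⟨le_rfl, le_rfl⟩

lemma eq_top_of_goursatFst_eq_top (hI₂ : Surjective (Prod.snd ∘ I.subtype))
    (h : I.goursatFst = ⊤) : I = ⊤ := by
  refine eq_top_iff.2 fun ⟨g, k⟩ _ => ?_
  obtain ⟨⟨⟨x, _⟩, hx⟩, rfl⟩ := hI₂ k
  have hg : g * x⁻¹ ∈ I.goursatFst := h ▸ mem_top _
  simpa using mul_mem (mem_goursatFst.1 hg) hx

lemma eq_top_of_goursatSnd_eq_top (hI₁ : Surjective (Prod.fst ∘ I.subtype))
    (h : I.goursatSnd = ⊤) : I = ⊤ := by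
  refine eq_top_iff.2 fun ⟨g, k⟩ _ => ?_
  obtain ⟨⟨⟨_, y⟩, hy⟩, rfl⟩ := hI₁ g
  have hk : y⁻¹ * k ∈ I.goursatSnd := h ▸ mem_top _
  simpa using mul_mem hy (mem_goursatSnd.1 hk)

end Subgroup

open Function Subgroup in
lemma IsCoatom.eq_prod_or_surjective_fst_and_snd {G H : Type*} [Group G] [Group H]
    {M : Subgroup (G × H)} (hM : IsCoatom M) :
    M = (M.map (MonoidHom.fst G H)).prod (M.map (MonoidHom.snd G H)) ∨
      Surjective (Prod.fst ∘ M.subtype) ∧ Surjective (Prod.snd ∘ M.subtype) := by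
  refine (M.le_prod_map_fst_map_snd.eq_or_lt).imp id fun hlt => ?_
  have htop := hM.2 _ hlt
  constructor
  · intro g
    obtain ⟨⟨x, hx, rfl⟩, -⟩ := mem_prod.1 (htop ▸ mem_top (g, (1 : H)))
    exact ⟨⟨x, hx⟩, rfl⟩
  · intro k
    obtain ⟨-, ⟨x, hx, rfl⟩⟩ := mem_prod.1 (htop ▸ mem_top ((1 : G), k))
    exact ⟨⟨x, hx⟩, rfl⟩

theorem maximal_subgroup_prod_of_no_common_quotient_general
    (G₁ G₂ : Type*) [Group G₁] [Group G₂]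
    (h : ∀ (N₁ : Subgroup G₁) (N₂ : Subgroup G₂) [N₁.Normal] [N₂.Normal],
      N₁ ≠ ⊤ → N₂ ≠ ⊤ → IsEmpty ((G₁ ⧸ N₁) ≃* (G₂ ⧸ N₂)))
    (M : Subgroup (G₁ × G₂)) (hM : IsCoatom M) :
    ∃ (M₁ : Subgroup G₁) (M₂ : Subgroup G₂), M = M₁.prod M₂ := by
  obtain hprod | ⟨h₁, h₂⟩ := hM.eq_prod_or_surjective_fst_and_snd
  · exact ⟨_, _, hprod⟩
  have := Subgroup.normal_goursatFst h₁
  have := Subgroup.normal_goursatSnd h₂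
  obtain ⟨e, -⟩ := Subgroup.goursat_surjective h₁ h₂
  have hN₁ : M.goursatFst ≠ ⊤ := fun hN => hM.1 (Subgroup.eq_top_of_goursatFst_eq_top h₂ hN)
  have hN₂ : M.goursatSnd ≠ ⊤ := fun hN => hM.1 (Subgroup.eq_top_of_goursatSnd_eq_top h₁ hN)
  exact ((h _ _ hN₁ hN₂).false e).elim

/-- If no nontrivial quotient of `G₁` is isomorphic to a nontrivial quotient of `G₂`, then
every maximal subgroup of `G₁ × G₂` splits as a direct product. -/
theorem maximal_subgroup_prod_of_no_common_quotient
    (G₁ G₂ : Type*) [Group G₁] [Group G₂] [Finite G₁] [Finite G₂]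
    (h : ∀ (N₁ : Subgroup G₁) (N₂ : Subgroup G₂) [N₁.Normal] [N₂.Normal],
      N₁ ≠ ⊤ → N₂ ≠ ⊤ → IsEmpty ((G₁ ⧸ N₁) ≃* (G₂ ⧸ N₂)))
    (M : Subgroup (G₁ × G₂)) (hM : IsCoatom M) :
    ∃ (M₁ : Subgroup G₁) (M₂ : Subgroup G₂), M = M₁.prod M₂ :=
  maximal_subgroup_prod_of_no_common_quotient_general G₁ G₂ h M hM
end
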